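/- Let P be a program over Σ and χ ∈ {κ, HT}, and let Π = P^χ ∪ P_g. The map S ↦ S ∪ {gap(Ka) : a occurs in P, Ka ∈ S and a ∉ S} is a bijection from AS(P^χ) onto AS(Π). Consequently, for every answer set M of Π, the set M with all fresh atoms gap(Ka) removed is an answer set of P^χ, and for every atom a occurring in P: gap(Ka) ∈ M if and only if Ka ∈ M and a ∉ M (hence gap(M) = {gap(Ka) : Ka ∈ 𝒢(M ∩ Σ^κ)}). -/
import Mathlib


namespace ASP

/-- A rule: head, positive body, negative body (finite sets of atoms). -/
structure Rule (α : Type) where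
  head : Finset α
  pos : Finset α
  neg : Finset α
deriving DecidableEq

/-- The extended propositional signature: original atoms of `Σ = σ`, the fresh
believed atoms `K a`, the fresh atoms `λ_{r,a}` (one for each rule `r` over `σ`
and each atom `a`, used for head atoms of `r`), and the fresh atoms `gap (K a)`. -/
inductive Atom (σ : Type) where
  | base : σ → Atom σ
  | K : σ → Atom σ
  | lam : Rule σ → σ → Atom σ
  | gap : σ → Atom σ
deriving DecidableEq

/-- An interpretation `I` satisfies rule `r`. -/
def Rule.sat {α : Type} (I : Set α) (r : Rule α) : Prop :=
  ((↑r.pos ⊆ I) ∧ ∀ b ∈ r.neg, b ∉ I) → ∃ a ∈ r.head, a ∈ I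

/-- `I` is a model of the program `P`. -/
def isModel {α : Type} (I : Set α) (P : Finset (Rule α)) : Prop :=
  ∀ r ∈ P, r.sat I

/-- `I` is a minimal model of `P`. -/
def isMinModel {α : Type} (I : Set α) (P : Finset (Rule α)) : Prop :=
  isModel I P ∧ ∀ J : Set α, J ⊂ I → ¬ isModel J P

open Classical in
/-- The Gelfond-Lifschitz reduct `P^I`. -/
noncomputable def reduct {α : Type} (P : Finset (Rule α)) (I : Set α) :
    Finset (Rule α) :=
  (P.filter (fun r => ∀ b ∈ r.neg, b ∉ I)).image (fun r => ⟨r.head, r.pos, ∅⟩)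

/-- The answer sets of `P`. -/
def AS {α : Type} (P : Finset (Rule α)) : Set (Set α) :=
  {I | isMinModel I (reduct P I)}

/-- The atoms occurring in a rule. -/
def ruleAtoms {α : Type} [DecidableEq α] (r : Rule α) : Finset α :=
  r.head ∪ r.pos ∪ r.neg

/-- `At(P)`: the atoms occurring in a program. -/
def progAtoms {α : Type} [DecidableEq α] (P : Finset (Rule α)) : Finset α :=
  P.biUnion ruleAtoms

/-- Map a rule along an atom translation. -/
def mapRule {σ α : Type} [DecidableEq α] (f : σ → α) (r : Rule σ) : Rule α :=
  ⟨r.head.image f, r.pos.image f, r.neg.image f⟩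

variable {σ : Type} [DecidableEq σ]

/-- The rules of `P^κ` produced for a single rule of `P`. -/
def kappaRule (r : Rule σ) : Finset (Rule (Atom σ)) :=
  if r.neg = ∅ then {mapRule Atom.base r}
  else
    {⟨r.head.image (Atom.lam r) ∪ r.neg.image Atom.K, r.pos.image Atom.base, ∅⟩}
    ∪ r.head.image (fun a => ⟨{Atom.base a}, {Atom.lam r a}, ∅⟩)
    ∪ (r.head ×ˢ r.neg).image
        (fun p => ⟨∅, {Atom.lam r p.1, Atom.base p.2}, ∅⟩)
    ∪ (r.head ×ˢ r.head).image
        (fun p => ⟨{Atom.lam r p.1}, {Atom.base p.1, Atom.lam r p.2}, ∅⟩)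

/-- The epistemic κ-transformation `P^κ`. -/
def kappa (P : Finset (Rule σ)) : Finset (Rule (Atom σ)) :=
  P.biUnion kappaRule

/-- The epistemic HT-transformation `P^HT`. -/
def ht (P : Finset (Rule σ)) : Finset (Rule (Atom σ)) :=
  kappa P
  ∪ (progAtoms P).image (fun a => ⟨{Atom.K a}, {Atom.base a}, ∅⟩)
  ∪ P.image (fun r => ⟨(r.head ∪ r.neg).image Atom.K, r.pos.image Atom.K, ∅⟩)

/-- The choice `χ ∈ {κ, HT}` of epistemic transformation. -/
inductive Chi | kappa | ht

/-- `P^χ` for `χ ∈ {κ, HT}`. -/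
def epi (χ : Chi) (P : Finset (Rule σ)) : Finset (Rule (Atom σ)) :=
  match χ with
  | Chi.kappa => kappa P
  | Chi.ht => ht P

/-- The gap program `P_g`: for each atom `a` occurring in `P`,
the rule `gap(Ka) ← Ka, not a`. -/
def Pg (P : Finset (Rule σ)) : Finset (Rule (Atom σ)) :=
  (progAtoms P).image (fun a => ⟨{Atom.gap a}, {Atom.K a}, {Atom.base a}⟩)

/-- `Π = P^χ ∪ P_g`. -/
def Pi' (χ : Chi) (P : Finset (Rule σ)) : Finset (Rule (Atom σ)) :=
  epi χ P ∪ Pg P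

/-- The signature `Σ^κ = Σ ∪ {Ka : a ∈ Σ}` as a set of extended atoms. -/
def SigmaK (σ : Type) : Set (Atom σ) :=
  Set.range Atom.base ∪ Set.range Atom.K

/-- The gap `𝒢(I) = {Ka : Ka ∈ I and a ∉ I}` of an interpretation. -/
def gapG (I : Set (Atom σ)) : Set (Atom σ) :=
  {x | ∃ a : σ, x = Atom.K a ∧ Atom.K a ∈ I ∧ Atom.base a ∉ I}

/-- Maximal canonical interpretations in `ℱ`. -/
def mc (F : Set (Set (Atom σ))) : Set (Set (Atom σ)) :=
  {I | I ∈ F ∧ ¬ ∃ J ∈ F, gapG J ⊂ gapG I}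

/-- The semi-stable models of `P`. -/
def SST (P : Finset (Rule σ)) : Set (Set (Atom σ)) :=
  {I | ∃ S ∈ mc (AS (kappa P)), I = S ∩ SigmaK σ}

/-- The semi-equilibrium models of `P`. -/
def SEQ (P : Finset (Rule σ)) : Set (Set (Atom σ)) :=
  {I | ∃ S ∈ mc (AS (ht P)), I = S ∩ SigmaK σ}

/-- The paracoherent semantics selected by `χ`. -/
def PSem (χ : Chi) (P : Finset (Rule σ)) : Set (Set (Atom σ)) :=
  match χ with
  | Chi.kappa => SST P
  | Chi.ht => SEQ P

/-- `M` is a paracoherent answer set of `P` (w.r.t. `χ`): `M` is an answer set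
of `Π = P^χ ∪ P_g` and `M ∩ Σ^κ ∈ SST(P)` (resp. `SEQ(P)`). -/
def paracoherent (χ : Chi) (P : Finset (Rule σ)) (M : Set (Atom σ)) : Prop :=
  M ∈ AS (Pi' χ P) ∧ M ∩ SigmaK σ ∈ PSem χ P

/-- `gap(I) = {gap(Ka) : a occurs in P and gap(Ka) ∈ I}`. -/
def gapSet (P : Finset (Rule σ)) (I : Set (Atom σ)) : Set (Atom σ) :=
  {x | ∃ a ∈ progAtoms P, x = Atom.gap a ∧ Atom.gap a ∈ I}

open Classical in
/-- `gap(I)` as a finite set (used for counting violated weak constraints). -/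
noncomputable def gapFin (P : Finset (Rule σ)) (I : Set (Atom σ)) :
    Finset (Atom σ) :=
  ((progAtoms P).image Atom.gap).filter (· ∈ I)

open Classical in
/-- The constraints `Π_M`: the constraint whose positive body is `gap(M)`,
plus, for each gap atom occurring in `Π` but not in `M`, the constraint
forbidding it. -/
noncomputable def PiM (P : Finset (Rule σ)) (M : Set (Atom σ)) :
    Finset (Rule (Atom σ)) :=
  {⟨∅, gapFin P M, ∅⟩}
  ∪ ((progAtoms P).filter (fun a => Atom.gap a ∉ M)).image
      (fun a => ⟨(∅ : Finset (Atom σ)), {Atom.gap a}, ∅⟩)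

/-- `M` is an optimum answer set of `Π ∪ W`, where `W` is the set of weak
constraints `↝ gap(Ka)` for `a ∈ At(P)`: an answer set of `Π` minimizing the
number `|gap(M)|` of violated weak constraints. -/
def optimum (χ : Chi) (P : Finset (Rule σ)) (M : Set (Atom σ)) : Prop :=
  M ∈ AS (Pi' χ P) ∧
    ∀ M' ∈ AS (Pi' χ P), (gapFin P M).card ≤ (gapFin P M').card

end ASP

namespace ASP

section Aux
variable {σ : Type} [DecidableEq σ]

lemma mem_reduct {α : Type} {P : Finset (Rule α)} {I : Set α} {r' : Rule α} :
    r' ∈ reduct P I ↔ ∃ r ∈ P, (∀ b ∈ r.neg, b ∉ I) ∧ r' = ⟨r.head, r.pos, ∅⟩ := by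
  classical
  simp only [reduct, Finset.mem_image, Finset.mem_filter]
  constructor
  · rintro ⟨r, ⟨hr, hn⟩, rfl⟩; exact ⟨r, hr, by simpa using hn, rfl⟩
  · rintro ⟨r, hr, hn, rfl⟩; exact ⟨r, ⟨hr, by simpa using hn⟩, rfl⟩

lemma reduct_neg_empty {α : Type} {P : Finset (Rule α)} {I : Set α} {r : Rule α}
    (h : r ∈ reduct P I) : r.neg = ∅ := by
  rcases mem_reduct.1 h with ⟨r₀, _, _, rfl⟩; rfl

lemma isModel_union {α : Type} [DecidableEq α] {I : Set α} {A B : Finset (Rule α)} :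
    isModel I (A ∪ B) ↔ isModel I A ∧ isModel I B := by
  simp [isModel, Finset.mem_union, or_imp, forall_and]

lemma reduct_union {α : Type} [DecidableEq α] (A B : Finset (Rule α)) (I : Set α) :
    reduct (A ∪ B) I = reduct A I ∪ reduct B I := by
  classical
  ext r'
  simp only [Finset.mem_union, mem_reduct, Finset.mem_union]
  constructor
  · rintro ⟨r, hr | hr, h⟩
    · exact Or.inl ⟨r, hr, h⟩
    · exact Or.inr ⟨r, hr, h⟩
  · rintro (⟨r, hr, h⟩ | ⟨r, hr, h⟩)
    · exact ⟨r, Or.inl hr, h⟩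
    · exact ⟨r, Or.inr hr, h⟩

lemma sat_congr {α : Type} [DecidableEq α] {r : Rule α} {I J : Set α}
    (h : ∀ x ∈ ruleAtoms r, (x ∈ I ↔ x ∈ J)) (hs : r.sat I) : r.sat J := by
  rintro ⟨hp, hn⟩
  obtain ⟨a, ha, haI⟩ := hs ⟨fun x hx => (h x (by
      simp only [ruleAtoms, Finset.mem_union]
      exact Or.inl (Or.inr (Finset.mem_coe.mp hx)))).2 (hp hx),
    fun b hb hbI => hn b hb ((h b (by
      simp only [ruleAtoms, Finset.mem_union]
      exact Or.inr hb)).1 hbI)⟩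
  exact ⟨a, ha, (h a (by
    simp only [ruleAtoms, Finset.mem_union]
    exact Or.inl (Or.inl ha))).1 haI⟩

lemma mem_head_of_min {α : Type} {Q : Finset (Rule α)} (hQ : ∀ r ∈ Q, r.neg = ∅)
    {I : Set α} (hI : isMinModel I Q) {x : α} (hx : x ∈ I) :
    ∃ r ∈ Q, x ∈ r.head := by
  by_contra hcon
  push_neg at hcon
  refine hI.2 (I \ {x}) (by exact Set.sdiff_singleton_ssubset.mpr hx) ?_
  rintro r hr ⟨hp, hn⟩
  obtain ⟨a, ha, haI⟩ := hI.1 r hr ⟨fun y hy => (hp hy).1, by simp [hQ r hr]⟩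
  exact ⟨a, ha, haI, fun he => hcon r hr (Set.mem_singleton_iff.1 he ▸ ha)⟩

lemma mem_progAtoms {P : Finset (Rule σ)} {r : Rule σ} (hr : r ∈ P) {a : σ}
    (ha : a ∈ ruleAtoms r) : a ∈ progAtoms P :=
  Finset.mem_biUnion.2 ⟨r, hr, ha⟩

lemma epi_no_gap {χ : Chi} {P : Finset (Rule σ)} {r : Rule (Atom σ)}
    (hr : r ∈ epi χ P) (a : σ) : Atom.gap a ∉ ruleAtoms r := by
  have hk : ∀ r' ∈ kappa P, Atom.gap a ∉ ruleAtoms r' := by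
    intro r' hr'
    simp only [kappa, Finset.mem_biUnion] at hr'
    obtain ⟨r₀, _, hr₀⟩ := hr'
    unfold kappaRule at hr₀
    split at hr₀
    · simp only [Finset.mem_singleton] at hr₀
      subst hr₀
      simp [ruleAtoms, mapRule]
    · simp only [Finset.union_assoc, Finset.mem_union, Finset.mem_singleton,
        Finset.mem_image, Finset.mem_product] at hr₀
      rcases hr₀ with h | ⟨b, _, rfl⟩ | ⟨p, _, rfl⟩ | ⟨p, _, rfl⟩
      · subst h; simp [ruleAtoms]
      · simp [ruleAtoms]
      · simp [ruleAtoms]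
      · simp [ruleAtoms]
  cases χ with
  | kappa => exact hk r hr
  | ht =>
    simp only [epi, ht, Finset.mem_union, Finset.mem_image] at hr
    rcases hr with (hr | ⟨b, _, rfl⟩) | ⟨r₀, _, rfl⟩
    · exact hk r hr
    · simp [ruleAtoms]
    · simp [ruleAtoms]

lemma epi_K_head {χ : Chi} {P : Finset (Rule σ)} {r : Rule (Atom σ)}
    (hr : r ∈ epi χ P) {a : σ} (ha : Atom.K a ∈ r.head) : a ∈ progAtoms P := by
  have hk : ∀ r' ∈ kappa P, Atom.K a ∈ r'.head → a ∈ progAtoms P := by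
    intro r' hr' ha'
    simp only [kappa, Finset.mem_biUnion] at hr'
    obtain ⟨r₀, hr₀P, hr₀⟩ := hr'
    unfold kappaRule at hr₀
    split at hr₀
    · simp only [Finset.mem_singleton] at hr₀
      subst hr₀
      simp [mapRule] at ha'
    · simp only [Finset.union_assoc, Finset.mem_union, Finset.mem_singleton,
        Finset.mem_image, Finset.mem_product] at hr₀
      rcases hr₀ with h | ⟨b, _, rfl⟩ | ⟨p, _, rfl⟩ | ⟨p, _, rfl⟩
      · subst h
        simp only [Finset.mem_union, Finset.mem_image] at ha'
        rcases ha' with ⟨b, _, h⟩ | ⟨b, hb, h⟩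
        · exact absurd h (by simp)
        · obtain rfl : b = a := by simpa using h
          exact mem_progAtoms hr₀P (by simp [ruleAtoms, hb])
      · simp at ha'
      · simp at ha'
      · simp at ha'
  cases χ with
  | kappa => exact hk r hr ha
  | ht =>
    simp only [epi, ht, Finset.mem_union, Finset.mem_image] at hr
    rcases hr with (hr | ⟨b, hb, rfl⟩) | ⟨r₀, hr₀, rfl⟩
    · exact hk r hr ha
    · obtain rfl : a = b := by simpa using ha
      exact hb
    · simp only [Finset.mem_image, Finset.mem_union] at ha
      obtain ⟨b, hb, h⟩ := ha
      obtain rfl : b = a := by simpa using h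
      exact mem_progAtoms hr₀ (by simp only [ruleAtoms, Finset.mem_union]; tauto)

lemma reduct_epi_no_gap {χ : Chi} {P : Finset (Rule σ)} {I : Set (Atom σ)}
    {r : Rule (Atom σ)} (hr : r ∈ reduct (epi χ P) I) (a : σ) :
    Atom.gap a ∉ ruleAtoms r := by
  rcases mem_reduct.1 hr with ⟨r₀, hr₀, _, rfl⟩
  intro h
  refine epi_no_gap hr₀ a ?_
  simp only [ruleAtoms, Finset.mem_union] at h ⊢
  rcases h with (h | h) | h
  · tauto
  · tauto
  · simp at h

lemma reduct_epi_congr {χ : Chi} {P : Finset (Rule σ)} {I J : Set (Atom σ)}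
    (h : ∀ x : Atom σ, (∀ a : σ, x ≠ Atom.gap a) → (x ∈ I ↔ x ∈ J)) :
    reduct (epi χ P) I = reduct (epi χ P) J := by
  ext r'
  simp only [mem_reduct]
  have key : ∀ r ∈ epi χ P, ∀ b ∈ r.neg, (b ∈ I ↔ b ∈ J) := by
    intro r hr b hb
    refine h b (fun a hba => epi_no_gap hr a ?_)
    subst hba
    simp only [ruleAtoms, Finset.mem_union]; tauto
  constructor
  · rintro ⟨r, hr, hn, rfl⟩
    exact ⟨r, hr, fun b hb hbJ => hn b hb ((key r hr b hb).2 hbJ), rfl⟩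
  · rintro ⟨r, hr, hn, rfl⟩
    exact ⟨r, hr, fun b hb hbI => hn b hb ((key r hr b hb).1 hbI), rfl⟩

lemma mem_reduct_Pg {P : Finset (Rule σ)} {I : Set (Atom σ)} {r' : Rule (Atom σ)} :
    r' ∈ reduct (Pg P) I ↔ ∃ a ∈ progAtoms P, Atom.base a ∉ I ∧
      r' = ⟨{Atom.gap a}, {Atom.K a}, ∅⟩ := by
  simp only [mem_reduct, Pg, Finset.mem_image]
  constructor
  · rintro ⟨r, ⟨a, ha, rfl⟩, hn, rfl⟩
    exact ⟨a, ha, by simpa using hn, rfl⟩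
  · rintro ⟨a, ha, hb, rfl⟩
    exact ⟨⟨{Atom.gap a}, {Atom.K a}, {Atom.base a}⟩, ⟨a, ha, rfl⟩, by simpa using hb, rfl⟩


lemma gapfree_of_AS {χ : Chi} {P : Finset (Rule σ)} {S : Set (Atom σ)}
    (hS : S ∈ AS (epi χ P)) (a : σ) : Atom.gap a ∉ S := by
  intro hga
  obtain ⟨r, hr, hh⟩ := mem_head_of_min (fun r hr => reduct_neg_empty hr) hS hga
  exact reduct_epi_no_gap hr a (by
    simp only [ruleAtoms, Finset.mem_union]; exact Or.inl (Or.inl hh))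

lemma fwd {χ : Chi} {P : Finset (Rule σ)} {S : Set (Atom σ)}
    (hS : S ∈ AS (epi χ P)) :
    (S ∪ {x | ∃ a ∈ progAtoms P, x = Atom.gap a ∧ Atom.K a ∈ S ∧ Atom.base a ∉ S})
      ∈ AS (Pi' χ P) := by
  classical
  set G : Set (Atom σ) :=
    {x | ∃ a ∈ progAtoms P, x = Atom.gap a ∧ Atom.K a ∈ S ∧ Atom.base a ∉ S} with hG
  set M : Set (Atom σ) := S ∪ G with hMdef
  have hagree : ∀ x : Atom σ, (∀ a : σ, x ≠ Atom.gap a) → (x ∈ S ↔ x ∈ M) := by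
    intro x hx
    constructor
    · exact fun h => Or.inl h
    · rintro (h | ⟨a, _, rfl, _⟩)
      · exact h
      · exact absurd rfl (hx a)
  have hred : reduct (epi χ P) M = reduct (epi χ P) S :=
    reduct_epi_congr (fun x hx => (hagree x hx).symm)
  have hredPi : reduct (Pi' χ P) M = reduct (epi χ P) S ∪ reduct (Pg P) M := by
    rw [Pi', reduct_union, hred]
  have hbase : ∀ a : σ, (Atom.base a ∈ S ↔ Atom.base a ∈ M) := fun a => hagree _ (by simp)
  have hK : ∀ a : σ, (Atom.K a ∈ S ↔ Atom.K a ∈ M) := fun a => hagree _ (by simp)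
  show isMinModel M (reduct (Pi' χ P) M)
  rw [hredPi]
  constructor
  · rw [isModel_union]
    constructor
    · intro r hr
      refine sat_congr (fun x hx => hagree x ?_) (hS.1 r hr)
      intro a hxa; exact reduct_epi_no_gap hr a (hxa ▸ hx)
    · intro r hr
      rcases mem_reduct_Pg.1 hr with ⟨a, haP, hbM, rfl⟩
      rintro ⟨hp, -⟩
      have hKa : Atom.K a ∈ M := hp (by simp)
      have hKaS : Atom.K a ∈ S := (hK a).2 hKa
      have hbS : Atom.base a ∉ S := fun h => hbM ((hbase a).1 h)
      exact ⟨Atom.gap a, by simp, Or.inr ⟨a, haP, rfl, hKaS, hbS⟩⟩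
  · intro J hJ hJmod
    rw [isModel_union] at hJmod
    set J' : Set (Atom σ) := J \ Set.range (Atom.gap : σ → Atom σ) with hJ'def
    have hJ'model : isModel J' (reduct (epi χ P) S) := by
      intro r hr
      rintro ⟨hp, -⟩
      obtain ⟨a, ha, haJ⟩ := hJmod.1 r hr ⟨fun x hx => (hp hx).1,
        by simp [reduct_neg_empty hr]⟩
      refine ⟨a, ha, haJ, ?_⟩
      rintro ⟨b, rfl⟩
      exact reduct_epi_no_gap hr b (by
        simp only [ruleAtoms, Finset.mem_union]; exact Or.inl (Or.inl ha))
    have hJsubM : J ⊆ M := hJ.1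
    have hJ'S : J' ⊆ S := by
      rintro x ⟨hxJ, hxg⟩
      rcases hJsubM hxJ with h | ⟨a, _, rfl, _⟩
      · exact h
      · exact absurd ⟨a, rfl⟩ hxg
    rcases Set.eq_or_ssubset_of_subset hJ'S with h | h
    case inr h => exact hS.2 J' h hJ'model
    case inl h =>
      have hMJ : M ⊆ J := by
        rintro x (hx | ⟨a, haP, rfl, hKa, hba⟩)
        · have hx' : x ∈ J' := by rw [h]; exact hx
          exact hx'.1
        · have hrule : (⟨{Atom.gap a}, {Atom.K a}, ∅⟩ : Rule (Atom σ)) ∈ reduct (Pg P) M :=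
            mem_reduct_Pg.2 ⟨a, haP, fun hb => hba ((hbase a).2 hb), rfl⟩
          have hKJ : Atom.K a ∈ J := by
            have hx' : Atom.K a ∈ J' := by rw [h]; exact hKa
            exact hx'.1
          obtain ⟨y, hy, hyJ⟩ := hJmod.2 _ hrule
            ⟨by simp only [Finset.coe_singleton, Set.singleton_subset_iff]; exact hKJ,
             by simp⟩
          obtain rfl : y = Atom.gap a := by simpa using hy
          exact hyJ
      exact hJ.2 hMJ

lemma bwd {χ : Chi} {P : Finset (Rule σ)} {M : Set (Atom σ)}
    (hM : M ∈ AS (Pi' χ P)) :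
    (∀ a : σ, Atom.gap a ∈ M → a ∈ progAtoms P ∧ Atom.base a ∉ M) ∧
    (∀ a : σ, Atom.K a ∈ M → a ∈ progAtoms P) ∧
    (∀ a : σ, a ∈ progAtoms P → (Atom.gap a ∈ M ↔ Atom.K a ∈ M ∧ Atom.base a ∉ M)) ∧
    (M \ Set.range Atom.gap) ∈ AS (epi χ P) := by
  classical
  have hredPi : reduct (Pi' χ P) M = reduct (epi χ P) M ∪ reduct (Pg P) M := by
    rw [Pi', reduct_union]
  have hMmin : isMinModel M (reduct (Pi' χ P) M) := hM
  have hmod := hMmin.1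
  rw [hredPi, isModel_union] at hmod
  have heads : ∀ x ∈ M, ∃ r ∈ reduct (Pi' χ P) M, x ∈ r.head :=
    fun x hx => mem_head_of_min (fun r hr => reduct_neg_empty hr) hM hx
  have hA : ∀ a : σ, Atom.gap a ∈ M → a ∈ progAtoms P ∧ Atom.base a ∉ M := by
    intro a hga
    obtain ⟨r, hr, hh⟩ := heads _ hga
    rw [hredPi, Finset.mem_union] at hr
    rcases hr with hr | hr
    · exact absurd (by
        simp only [ruleAtoms, Finset.mem_union]; exact Or.inl (Or.inl hh))
        (reduct_epi_no_gap hr a)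
    · rcases mem_reduct_Pg.1 hr with ⟨b, hbP, hbM, rfl⟩
      obtain rfl : a = b := by simpa using hh
      exact ⟨hbP, hbM⟩
  have hB : ∀ a : σ, Atom.K a ∈ M → a ∈ progAtoms P := by
    intro a hKa
    obtain ⟨r, hr, hh⟩ := heads _ hKa
    rw [hredPi, Finset.mem_union] at hr
    rcases hr with hr | hr
    · rcases mem_reduct.1 hr with ⟨r₀, hr₀, -, rfl⟩
      exact epi_K_head hr₀ hh
    · rcases mem_reduct_Pg.1 hr with ⟨b, hbP, hbM, rfl⟩
      simp at hh
  have hCrev : ∀ a : σ, a ∈ progAtoms P → Atom.K a ∈ M → Atom.base a ∉ M →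
      Atom.gap a ∈ M := by
    intro a haP hKa hba
    have hrule : (⟨{Atom.gap a}, {Atom.K a}, ∅⟩ : Rule (Atom σ)) ∈ reduct (Pg P) M :=
      mem_reduct_Pg.2 ⟨a, haP, hba, rfl⟩
    obtain ⟨y, hy, hyM⟩ := hmod.2 _ hrule
      ⟨by simp only [Finset.coe_singleton, Set.singleton_subset_iff]; exact hKa, by simp⟩
    obtain rfl : y = Atom.gap a := by simpa using hy
    exact hyM
  have hC : ∀ a : σ, a ∈ progAtoms P →
      (Atom.gap a ∈ M ↔ Atom.K a ∈ M ∧ Atom.base a ∉ M) := by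
    intro a haP
    constructor
    · intro hga
      refine ⟨?_, (hA a hga).2⟩
      by_contra hKa
      refine hMmin.2 (M \ {Atom.gap a}) (Set.sdiff_singleton_ssubset.mpr hga) ?_
      rw [hredPi, isModel_union]
      constructor
      · intro r hr
        rintro ⟨hp, -⟩
        obtain ⟨y, hy, hyM⟩ := hmod.1 r hr ⟨fun x hx => (hp hx).1,
          by simp [reduct_neg_empty hr]⟩
        refine ⟨y, hy, hyM, ?_⟩
        intro hcon
        obtain rfl : y = Atom.gap a := Set.mem_singleton_iff.1 hcon
        exact reduct_epi_no_gap hr a (by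
          simp only [ruleAtoms, Finset.mem_union]; exact Or.inl (Or.inl hy))
      · intro r hr
        rcases mem_reduct_Pg.1 hr with ⟨b, hbP, hbM, rfl⟩
        rintro ⟨hp, -⟩
        have hKb : Atom.K b ∈ M := (hp (by simp)).1
        have hgb : Atom.gap b ∈ M := hCrev b hbP hKb hbM
        refine ⟨Atom.gap b, by simp, hgb, ?_⟩
        intro hcon
        obtain rfl : b = a := by simpa using Set.mem_singleton_iff.1 hcon
        exact hKa hKb
    · rintro ⟨hKa, hba⟩
      exact hCrev a haP hKa hba
  refine ⟨hA, hB, hC, ?_⟩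
  set S : Set (Atom σ) := M \ Set.range Atom.gap with hSdef
  have hagree : ∀ x : Atom σ, (∀ a : σ, x ≠ Atom.gap a) → (x ∈ S ↔ x ∈ M) := by
    intro x hx
    constructor
    · exact fun h => h.1
    · exact fun h => ⟨h, by rintro ⟨b, rfl⟩; exact hx b rfl⟩
  have hred : reduct (epi χ P) S = reduct (epi χ P) M := reduct_epi_congr hagree
  show isMinModel S (reduct (epi χ P) S)
  rw [hred]
  constructor
  · intro r hr
    refine sat_congr (fun x hx => ?_) (hmod.1 r hr)
    refine (hagree x (fun a hxa => reduct_epi_no_gap hr a (hxa ▸ hx))).symm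
  · intro J hJ hJmod
    set J'' : Set (Atom σ) := J ∪ (M ∩ Set.range Atom.gap) with hJ''def
    have hJS : J ⊆ S := hJ.1
    have hJ''M : J'' ⊆ M := by
      rintro x (hx | hx)
      · exact (hJS hx).1
      · exact hx.1
    obtain ⟨x, hxS, hxJ⟩ := Set.exists_of_ssubset hJ
    have hx'' : x ∉ J'' := by
      rintro (h | h)
      · exact hxJ h
      · exact hxS.2 h.2
    have hss : J'' ⊂ M := ⟨hJ''M, fun hsub => hx'' (hsub hxS.1)⟩
    refine hMmin.2 J'' hss ?_
    rw [hredPi, isModel_union]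
    constructor
    · intro r hr
      rintro ⟨hp, -⟩
      have hpJ : ↑r.pos ⊆ J := by
        intro y hy
        rcases hp hy with h | h
        · exact h
        · exact absurd h.2 (by
            rintro ⟨b, rfl⟩
            exact reduct_epi_no_gap hr b (by
              simp only [ruleAtoms, Finset.mem_union]
              exact Or.inl (Or.inr (Finset.mem_coe.mp hy))))
      obtain ⟨y, hy, hyJ⟩ := hJmod r hr ⟨hpJ, by simp [reduct_neg_empty hr]⟩
      exact ⟨y, hy, Or.inl hyJ⟩
    · intro r hr
      rcases mem_reduct_Pg.1 hr with ⟨b, hbP, hbM, rfl⟩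
      rintro ⟨hp, -⟩
      have hKb : Atom.K b ∈ J'' := hp (by simp)
      have hKbM : Atom.K b ∈ M := hJ''M hKb
      have hgb : Atom.gap b ∈ M := hCrev b hbP hKbM hbM
      exact ⟨Atom.gap b, by simp, Or.inr ⟨hgb, ⟨b, rfl⟩⟩⟩

end Aux
end ASP

open ASP in
/-- The map `S ↦ S ∪ {gap(Ka) : a ∈ At(P), Ka ∈ S, a ∉ S}` is a
bijection from `AS(P^χ)` onto `AS(Π)`; consequently, for every `M ∈ AS(Π)`,
removing all gap atoms from `M` yields an answer set of `P^χ`, and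
`gap(Ka) ∈ M ↔ Ka ∈ M ∧ a ∉ M` for all `a ∈ At(P)` (hence
`gap(M) = {gap(Ka) : Ka ∈ 𝒢(M ∩ Σ^κ)}`). -/
theorem stmt7 {σ : Type} [DecidableEq σ] [Countable σ] [Infinite σ]
    (P : Finset (Rule σ)) (χ : Chi) :
    Set.BijOn
      (fun S : Set (Atom σ) =>
        S ∪ {x | ∃ a ∈ progAtoms P,
              x = Atom.gap a ∧ Atom.K a ∈ S ∧ Atom.base a ∉ S})
      (AS (epi χ P)) (AS (Pi' χ P)) ∧
    ∀ M ∈ AS (Pi' χ P),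
      (M \ Set.range Atom.gap) ∈ AS (epi χ P) ∧
      (∀ a ∈ progAtoms P,
        (Atom.gap a ∈ M ↔ Atom.K a ∈ M ∧ Atom.base a ∉ M)) ∧
      gapSet P M =
        {x | ∃ a : σ, x = Atom.gap a ∧ Atom.K a ∈ gapG (M ∩ SigmaK σ)} := by
  classical
  have hKmem : ∀ (M : Set (Atom σ)) (a : σ),
      (Atom.K a ∈ M \ Set.range Atom.gap ↔ Atom.K a ∈ M) := by
    intro M a
    constructor
    · exact fun h => h.1
    · exact fun h => ⟨h, by rintro ⟨b, hb⟩; cases hb⟩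
  have hbmem : ∀ (M : Set (Atom σ)) (a : σ),
      (Atom.base a ∈ M \ Set.range Atom.gap ↔ Atom.base a ∈ M) := by
    intro M a
    constructor
    · exact fun h => h.1
    · exact fun h => ⟨h, by rintro ⟨b, hb⟩; cases hb⟩
  have hrecon : ∀ M ∈ AS (Pi' χ P),
      ((M \ Set.range Atom.gap) ∪ {x | ∃ a ∈ progAtoms P,
        x = Atom.gap a ∧ Atom.K a ∈ M \ Set.range Atom.gap ∧
        Atom.base a ∉ M \ Set.range Atom.gap}) = M := by
    intro M hM
    obtain ⟨hA, hB, hC, hS⟩ := bwd hM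
    ext x
    constructor
    · rintro (h | ⟨a, haP, rfl, hKa, hba⟩)
      · exact h.1
      · exact (hC a haP).2 ⟨(hKmem M a).1 hKa, fun hb => hba ((hbmem M a).2 hb)⟩
    · intro hxM
      by_cases hg : x ∈ Set.range (Atom.gap : σ → Atom σ)
      · obtain ⟨b, rfl⟩ := hg
        have h1 := hA b hxM
        have h2 := (hC b h1.1).1 hxM
        exact Or.inr ⟨b, h1.1, rfl, (hKmem M b).2 h2.1, fun hc => h2.2 hc.1⟩
      · exact Or.inl ⟨hxM, hg⟩
  have hfS : ∀ S ∈ AS (epi χ P),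
      (S ∪ {x | ∃ a ∈ progAtoms P, x = Atom.gap a ∧ Atom.K a ∈ S ∧ Atom.base a ∉ S})
        \ Set.range Atom.gap = S := by
    intro S hS
    ext x
    constructor
    · rintro ⟨(h | ⟨a, _, rfl, _⟩), hg⟩
      · exact h
      · exact absurd ⟨a, rfl⟩ hg
    · intro hx
      refine ⟨Or.inl hx, ?_⟩
      rintro ⟨b, rfl⟩
      exact gapfree_of_AS hS b hx
  constructor
  · refine ⟨fun S hS => fwd hS, ?_, ?_⟩
    · intro S₁ h₁ S₂ h₂ heq
      have h' := congrArg (fun T : Set (Atom σ) => T \ Set.range Atom.gap) heq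
      dsimp only at h'
      rw [hfS S₁ h₁, hfS S₂ h₂] at h'
      exact h'
    · intro M hM
      exact ⟨M \ Set.range Atom.gap, (bwd hM).2.2.2, hrecon M hM⟩
  · intro M hM
    obtain ⟨hA, hB, hC, hS⟩ := bwd hM
    refine ⟨hS, fun a ha => hC a ha, ?_⟩
    ext x
    simp only [gapSet, gapG, SigmaK, Set.mem_setOf_eq, Set.mem_inter_iff,
      Set.mem_union, Set.mem_range]
    constructor
    · rintro ⟨a, haP, rfl, hga⟩
      have h2 := (hC a haP).1 hga
      exact ⟨a, rfl, a, rfl, ⟨h2.1, Or.inr ⟨a, rfl⟩⟩, fun hc => h2.2 hc.1⟩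
    · rintro ⟨a, rfl, b, hab, hKb, hbb⟩
      obtain rfl : a = b := by simpa using hab
      have haP := hB a hKb.1
      exact ⟨a, haP, rfl, (hC a haP).2 ⟨hKb.1, fun hb => hbb ⟨hb, Or.inl ⟨a, rfl⟩⟩⟩⟩
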